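/- Let b > 0 and let h⁺ : [0,∞) → ℝ be positive, nonincreasing, differentiable with lim_{t→∞} h⁺(t) = L. Let θ solve θ' + b(θ + h⁺) = 0 with θ(0) + h⁺(0) ≤ 0. Then lim_{t→∞} θ(t) = -L and lim_{t→∞} θ'(t) = 0. -/

import Mathlib

/-!
The integrating factor `exp (b t)` shows `θ + h ≤ 0` from `θ 0 + h 0 ≤ 0` and `h' ≤ 0`, so
`θ' = -b (θ + h) ≥ 0`: `θ` increases, and it is bounded by `-h ≤ -L`. Hence `θ → M` and
`θ' → -b (M + L)`; a convergent function cannot have a derivative with a nonzero limit, so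
`M = -L`, and then `θ' → 0`.
-/

open Set Filter Topology

theorem MonotoneOn.exists_tendsto_atTop_of_bddAbove_Ici {α β : Type*} [Preorder α]
    [IsDirectedOrder α] [ConditionallyCompleteLinearOrder β] [TopologicalSpace β]
    [OrderTopology β] {f : α → β} {a : α} (hf : MonotoneOn f (Ici a))
    (hbdd : BddAbove (f '' Ici a)) : ∃ M, Tendsto f atTop (𝓝 M) := by
  have hmono : Monotone fun x : Ici a => f x := fun x y hxy => hf x.2 y.2 hxy
  have hrange : BddAbove (range fun x : Ici a => f x) := by rwa [← image_eq_range]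
  exact ⟨_, tendsto_comp_val_Ici_atTop.mp (tendsto_atTop_ciSup hmono hrange)⟩

theorem AntitoneOn.le_of_tendsto_Ici {α β : Type*} [Preorder α] [IsDirectedOrder α]
    [Preorder β] [TopologicalSpace β] [OrderClosedTopology β] {f : α → β} {a x : α} {L : β}
    (hf : AntitoneOn f (Ici a)) (hL : Tendsto f atTop (𝓝 L)) (hx : x ∈ Ici a) : L ≤ f x :=
  haveI : Nonempty α := ⟨x⟩
  le_of_tendsto hL <| (eventually_ge_atTop x).mono fun _ hy =>
    hf hx (mem_Ici.2 (le_trans hx hy)) hy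

section Ici

variable {f f' : ℝ → ℝ} {a : ℝ}

theorem hasDerivAt_of_hasDerivWithinAt_Ici (hf : ∀ t ∈ Ici a, HasDerivWithinAt f (f' t) (Ici a) t)
    {t : ℝ} (ht : t ∈ Ioi a) : HasDerivAt f (f' t) t :=
  (hf t (mem_Ici_of_Ioi ht)).hasDerivAt (Ici_mem_nhds ht)

theorem monotoneOn_Ici_of_hasDerivWithinAt_nonneg
    (hf : ∀ t ∈ Ici a, HasDerivWithinAt f (f' t) (Ici a) t) (hf' : ∀ t ∈ Ioi a, 0 ≤ f' t) :
    MonotoneOn f (Ici a) := by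
  refine monotoneOn_of_hasDerivWithinAt_nonneg (convex_Ici a)
    (fun t ht => (hf t ht).continuousWithinAt) (fun t ht => ?_) (by simpa using hf')
  rw [interior_Ici] at ht ⊢
  exact (hasDerivAt_of_hasDerivWithinAt_Ici hf ht).hasDerivWithinAt

theorem antitoneOn_Ici_of_hasDerivWithinAt_nonpos
    (hf : ∀ t ∈ Ici a, HasDerivWithinAt f (f' t) (Ici a) t) (hf' : ∀ t ∈ Ioi a, f' t ≤ 0) :
    AntitoneOn f (Ici a) := fun _ hx _ hy hxy =>
  neg_le_neg_iff.mp <| monotoneOn_Ici_of_hasDerivWithinAt_nonneg (f := -f) (f' := -f')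
    (fun t ht => (hf t ht).neg) (fun t ht => neg_nonneg.mpr (hf' t ht)) hx hy hxy

-- The integrating factor `exp (b t)` turns `u' + b u ≤ 0` into `(exp (b t) * u t)' ≤ 0`.
theorem nonpos_of_hasDerivWithinAt_add_mul_nonpos {u u' : ℝ → ℝ} {b : ℝ}
    (hu : ∀ t ∈ Ici a, HasDerivWithinAt u (u' t) (Ici a) t)
    (hle : ∀ t ∈ Ici a, u' t + b * u t ≤ 0) (ha : u a ≤ 0) {t : ℝ} (ht : t ∈ Ici a) :
    u t ≤ 0 := by
  have hderiv : ∀ s ∈ Ici a, HasDerivWithinAt (fun s => Real.exp (b * s) * u s)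
      (Real.exp (b * s) * (u' s + b * u s)) (Ici a) s := by
    intro s hs
    have hexp : HasDerivAt (fun s => Real.exp (b * s)) (Real.exp (b * s) * b) s := by
      simpa using ((hasDerivAt_id s).const_mul b).exp
    exact (hexp.hasDerivWithinAt.mul (hu s hs)).congr_deriv (by ring)
  have hanti := antitoneOn_Ici_of_hasDerivWithinAt_nonpos hderiv fun s hs =>
    mul_nonpos_of_nonneg_of_nonpos (Real.exp_nonneg _) (hle s (mem_Ici_of_Ioi hs))
  have : Real.exp (b * t) * u t ≤ Real.exp (b * a) * u a := hanti self_mem_Ici ht ht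
  exact nonpos_of_mul_nonpos_right (this.trans (mul_nonpos_of_nonneg_of_nonpos
    (Real.exp_nonneg _) ha)) (Real.exp_pos _)

end Ici

theorem nonpos_of_tendsto_of_tendsto_deriv {f f' : ℝ → ℝ} {M c : ℝ}
    (hf : ∀ᶠ t in atTop, HasDerivAt f (f' t) t) (hf' : Tendsto f' atTop (𝓝 c))
    (hfM : Tendsto f atTop (𝓝 M)) : c ≤ 0 := by
  by_contra! hc
  obtain ⟨T, hT⟩ := (hf.and (hf'.eventually_const_le (half_lt_self hc))).exists_forall_of_atTop
  have hgrowth : ∀ t ∈ Ici T, c / 2 * (t - T) ≤ f t - f T :=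
    fun t ht => (convex_Ici T).mul_sub_le_image_sub_of_le_deriv
      (fun s hs => (hT s hs).1.continuousAt.continuousWithinAt)
      (fun s hs => (hT s (interior_subset hs)).1.differentiableAt.differentiableWithinAt)
      (fun s hs => (hT s (interior_subset hs)).1.deriv ▸ (hT s (interior_subset hs)).2)
      T self_mem_Ici t ht ht
  have hlin : Tendsto (fun t => f T + c / 2 * (t - T)) atTop atTop :=
    tendsto_atTop_add_const_left _ _
      ((tendsto_atTop_add_const_right _ _ tendsto_id).const_mul_atTop (half_pos hc))
  refine not_tendsto_nhds_of_tendsto_atTop (tendsto_atTop_mono' _ ?_ hlin) M hfM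
  filter_upwards [eventually_ge_atTop T] with t ht
  linarith [hgrowth t ht]

theorem eq_zero_of_tendsto_of_tendsto_deriv {f f' : ℝ → ℝ} {M c : ℝ}
    (hf : ∀ᶠ t in atTop, HasDerivAt f (f' t) t) (hf' : Tendsto f' atTop (𝓝 c))
    (hfM : Tendsto f atTop (𝓝 M)) : c = 0 :=
  le_antisymm (nonpos_of_tendsto_of_tendsto_deriv hf hf' hfM) <| neg_nonpos.mp <|
    nonpos_of_tendsto_of_tendsto_deriv (hf.mono fun _ h => h.neg) hf'.neg hfM.neg

theorem stmt_12_general (b : ℝ) (hb : 0 < b) (L : ℝ)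
    (h θ : ℝ → ℝ) (h' θ' : ℝ → ℝ)
    (hderiv : ∀ t ∈ Ici (0 : ℝ), HasDerivWithinAt h (h' t) (Ici 0) t)
    (hmono : ∀ t ∈ Ici (0 : ℝ), h' t ≤ 0)
    (hlim : Tendsto h atTop (nhds L))
    (hode : ∀ t ∈ Ici (0 : ℝ), HasDerivWithinAt θ (θ' t) (Ici 0) t)
    (heq : ∀ t ∈ Ici (0 : ℝ), θ' t + b * (θ t + h t) = 0)
    (h0 : θ 0 + h 0 ≤ 0) :
    Tendsto θ atTop (nhds (-L)) ∧ Tendsto θ' atTop (nhds 0) := by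
  have hsum_nonpos : ∀ t ∈ Ici (0 : ℝ), θ t + h t ≤ 0 := fun t =>
    nonpos_of_hasDerivWithinAt_add_mul_nonpos (b := b) (fun s hs => (hode s hs).add (hderiv s hs))
      (fun s hs => by simp only [Pi.add_apply]; linarith [heq s hs, hmono s hs]) h0
  have hθ'_eq : ∀ t ∈ Ici (0 : ℝ), θ' t = -b * (θ t + h t) := fun t ht => by
    linarith [heq t ht]
  have hθ_mono : MonotoneOn θ (Ici 0) := monotoneOn_Ici_of_hasDerivWithinAt_nonneg hode
    fun t ht => by
      rw [hθ'_eq t (mem_Ici_of_Ioi ht)]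
      exact mul_nonneg_of_nonpos_of_nonpos (by linarith) (hsum_nonpos t (mem_Ici_of_Ioi ht))
  have hh_anti := antitoneOn_Ici_of_hasDerivWithinAt_nonpos hderiv
    fun t ht => hmono t (mem_Ici_of_Ioi ht)
  obtain ⟨M, hM⟩ := hθ_mono.exists_tendsto_atTop_of_bddAbove_Ici ⟨-L, by
    rintro _ ⟨t, ht, rfl⟩
    linarith [hsum_nonpos t ht, hh_anti.le_of_tendsto_Ici hlim ht]⟩
  have hθ'_lim : Tendsto θ' atTop (𝓝 (-b * (M + L))) :=
    ((hM.add hlim).const_mul (-b)).congr' <| (eventually_ge_atTop 0).mono fun t ht =>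
      (hθ'_eq t ht).symm
  have hθ_deriv : ∀ᶠ t in atTop, HasDerivAt θ (θ' t) t :=
    (eventually_gt_atTop 0).mono fun t ht => hasDerivAt_of_hasDerivWithinAt_Ici hode ht
  have hML : M = -L := by
    have := eq_zero_of_tendsto_of_tendsto_deriv hθ_deriv hθ'_lim hM
    linarith [(mul_eq_zero.mp this).resolve_left (neg_ne_zero.mpr hb.ne')]
  rw [hML, neg_add_cancel, mul_zero] at hθ'_lim
  exact ⟨hML ▸ hM, hθ'_lim⟩

/-- If moreover h⁺(t) → L as t → ∞, then θ(t) → -L and θ'(t) → 0. -/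
theorem stmt_12 (b : ℝ) (hb : 0 < b) (L : ℝ)
    (h θ : ℝ → ℝ) (h' θ' : ℝ → ℝ)
    (hpos : ∀ t ∈ Ici (0 : ℝ), 0 < h t)
    (hderiv : ∀ t ∈ Ici (0 : ℝ), HasDerivWithinAt h (h' t) (Ici 0) t)
    (hmono : ∀ t ∈ Ici (0 : ℝ), h' t ≤ 0)
    (hlim : Tendsto h atTop (nhds L))
    (hode : ∀ t ∈ Ici (0 : ℝ), HasDerivWithinAt θ (θ' t) (Ici 0) t)
    (heq : ∀ t ∈ Ici (0 : ℝ), θ' t + b * (θ t + h t) = 0)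
    (h0 : θ 0 + h 0 ≤ 0) :
    Tendsto θ atTop (nhds (-L)) ∧ Tendsto θ' atTop (nhds 0) :=
  stmt_12_general b hb L h θ h' θ' hderiv hmono hlim hode heq h0
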